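/- Let {E_i}_{i=1}^n be a POVM on ℂ^d and define its disturbance D = Σ_{l,m=1}^n (tr(√E_l √E_m))² − 2 Σ_{l=1}^n (tr √E_l)² + d². Then D ≥ 0, and D = 0 if and only if every effect E_i is a nonnegative real scalar multiple of the identity matrix. -/

import Mathlib

open Matrix BigOperators
open scoped ComplexOrder

/-- The positive semidefinite square root of a positive semidefinite matrix
(the definition `Matrix.PosSemidef.sqrt` of the older Mathlib, since removed). -/
noncomputable def Matrix.PosSemidef.sqrt {n : Type*} [Fintype n] [DecidableEq n] {𝕜 : Type*}
    [RCLike 𝕜] {A : Matrix n n 𝕜} (hA : A.PosSemidef) : Matrix n n 𝕜 :=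
  hA.1.eigenvectorUnitary.1 * diagonal ((↑) ∘ (·.sqrt) ∘ hA.1.eigenvalues) *
  (star hA.1.eigenvectorUnitary : Matrix n n 𝕜)

/-!
With `F l = √(E l)` and `S = ∑ l, F l ⊗ₖ F l`, the three terms of `D` are `tr (S * S)`, `tr S` and
`tr 1` on `ℂ^d ⊗ ℂ^d`, so `D = tr ((S - 1)ᴴ * (S - 1))` is the squared Hilbert–Schmidt norm of
`S - 1`: it is nonnegative and vanishes iff `S = 1`. Read entrywise, `S = 1` gives
`∑ l, |F l i k|² = 0` for `i ≠ k` and `∑ l, (F l i i - F l j j)² = 0`, so every `F l` is a real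
scalar matrix. Conversely, scalar effects give `S = (∑ l, E l) ⊗ₖ 1 = 1`.
-/

open scoped Kronecker MatrixOrder

namespace Matrix

section Sqrt

variable {m 𝕜 : Type*} [Fintype m] [DecidableEq m] [RCLike 𝕜] {A : Matrix m m 𝕜}

theorem PosSemidef.sqrt_eq_cfc (hA : A.PosSemidef) : hA.sqrt = cfc Real.sqrt A := by
  rw [hA.1.cfc_eq, IsHermitian.cfc, Unitary.conjStarAlgAut_apply]
  rfl

theorem PosSemidef.sqrt_eq_cfcSqrt (hA : A.PosSemidef) : hA.sqrt = CFC.sqrt A := by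
  rw [hA.sqrt_eq_cfc, CFC.sqrt_eq_real_sqrt A hA.nonneg, cfcₙ_eq_cfc]

theorem PosSemidef.posSemidef_sqrt (hA : A.PosSemidef) : hA.sqrt.PosSemidef :=
  hA.sqrt_eq_cfcSqrt ▸ (CFC.sqrt_nonneg A).posSemidef

theorem PosSemidef.sqrt_mul_self (hA : A.PosSemidef) : hA.sqrt * hA.sqrt = A := by
  rw [hA.sqrt_eq_cfcSqrt, CFC.sqrt_mul_sqrt_self A hA.nonneg]

theorem PosSemidef.sqrt_eq_smul_one {c : ℝ} (hA : A.PosSemidef) (h : A = (c : 𝕜) • 1) :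
    hA.sqrt = (√c : 𝕜) • 1 := by
  have hsmul_one : ∀ r : ℝ, ((r : 𝕜) • 1 : Matrix m m 𝕜) = algebraMap ℝ _ r := fun r => by
    rw [Algebra.algebraMap_eq_smul_one, RCLike.real_smul_eq_coe_smul (K := 𝕜)]
  rw [hA.sqrt_eq_cfc, h, hsmul_one, hsmul_one, cfc_algebraMap]

end Sqrt

section KroneckerSquares

variable {ι m R : Type*} [Fintype ι] [CommRing R]

theorem trace_sub_one_mul_sub_one [Fintype m] [DecidableEq m] (S : Matrix m m R) :
    ((S - 1) * (S - 1)).trace = (S * S).trace - 2 * S.trace + (Fintype.card m : R) := by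
  have : (S - 1) * (S - 1) = S * S - 2 • S + 1 := by noncomm_ring
  rw [this, trace_add, trace_sub, trace_smul, trace_one, nsmul_eq_mul, Nat.cast_ofNat]

theorem trace_sum_kronecker_self [Fintype m] (F : ι → Matrix m m R) :
    (∑ l, F l ⊗ₖ F l).trace = ∑ l, (F l).trace ^ 2 := by
  simp only [trace_sum, trace_kronecker, sq]

theorem trace_sum_kronecker_self_mul_self [Fintype m] (F : ι → Matrix m m R) :
    ((∑ l, F l ⊗ₖ F l) * ∑ l, F l ⊗ₖ F l).trace = ∑ l, ∑ k, (F l * F k).trace ^ 2 := by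
  simp only [Finset.sum_mul_sum, trace_sum, ← mul_kronecker_mul, trace_kronecker, sq]

theorem sum_kronecker_self_apply (F : ι → Matrix m m R) (i j k p : m) :
    (∑ l, F l ⊗ₖ F l) (i, j) (k, p) = ∑ l, F l i k * F l j p := by
  simp only [sum_apply, kroneckerMap_apply]

theorem sum_kronecker_self_eq_mul_self_kronecker_one [Fintype m] [DecidableEq m]
    {F : ι → Matrix m m R} (hF : ∀ l, ∃ c : R, F l = c • 1) :
    ∑ l, F l ⊗ₖ F l = (∑ l, F l * F l) ⊗ₖ (1 : Matrix m m R) := by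
  have hterm : ∀ l, F l ⊗ₖ F l = (F l * F l) ⊗ₖ (1 : Matrix m m R) := fun l => by
    obtain ⟨c, hc⟩ := hF l
    rw [hc, smul_kronecker, kronecker_smul, smul_mul, one_mul, smul_kronecker, smul_kronecker]
  simp_rw [hterm]
  ext
  simp only [sum_apply, kroneckerMap_apply, Finset.sum_mul]

variable {𝕜 : Type*} [RCLike 𝕜]

theorem IsHermitian.sum_kronecker_self {F : ι → Matrix m m 𝕜} (hF : ∀ l, (F l).IsHermitian) :
    (∑ l, F l ⊗ₖ F l).IsHermitian := by
  simp only [IsHermitian, conjTranspose_sum, conjTranspose_kronecker, (hF _).eq]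

end KroneckerSquares

section Disturbance

variable {ι m 𝕜 : Type*} [Fintype ι] [Fintype m] [RCLike 𝕜]

theorem IsHermitian.coe_re_trace {A : Matrix m m 𝕜} (hA : A.IsHermitian) :
    (RCLike.re A.trace : 𝕜) = A.trace :=
  RCLike.conj_eq_iff_re.mp <| by rw [← RCLike.star_def, ← trace_conjTranspose, hA.eq]

theorem IsHermitian.coe_re_trace_mul {A B : Matrix m m 𝕜} (hA : A.IsHermitian)
    (hB : B.IsHermitian) : (RCLike.re (A * B).trace : 𝕜) = (A * B).trace :=
  RCLike.conj_eq_iff_re.mp <| by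
    rw [← RCLike.star_def, ← trace_conjTranspose, conjTranspose_mul, hA.eq, hB.eq, trace_mul_comm]

variable [DecidableEq m]

/-- The disturbance of the POVM `{F l * F l}`, expressed through the square roots `F l`. -/
noncomputable def disturbance (F : ι → Matrix m m 𝕜) : ℝ :=
  ∑ l, ∑ k, RCLike.re (F l * F k).trace ^ 2 - 2 * ∑ l, RCLike.re (F l).trace ^ 2
    + (Fintype.card m : ℝ) ^ 2

theorem ofReal_disturbance {F : ι → Matrix m m 𝕜} (hF : ∀ l, (F l).IsHermitian) :
    (disturbance F : 𝕜) =
      ((∑ l, F l ⊗ₖ F l - 1)ᴴ * (∑ l, F l ⊗ₖ F l - 1)).trace := by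
  rw [((IsHermitian.sum_kronecker_self hF).sub isHermitian_one).eq, trace_sub_one_mul_sub_one,
    trace_sum_kronecker_self_mul_self, trace_sum_kronecker_self, disturbance]
  push_cast
  simp only [fun l k => (hF l).coe_re_trace_mul (hF k), fun l => (hF l).coe_re_trace,
    Fintype.card_prod, Nat.cast_mul, sq]

theorem disturbance_nonneg {F : ι → Matrix m m 𝕜} (hF : ∀ l, (F l).IsHermitian) :
    0 ≤ disturbance F := by
  rw [← RCLike.ofReal_nonneg (K := 𝕜), ofReal_disturbance hF]
  exact (posSemidef_conjTranspose_mul_self _).trace_nonneg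

theorem disturbance_eq_zero_iff {F : ι → Matrix m m 𝕜} (hF : ∀ l, (F l).IsHermitian) :
    disturbance F = 0 ↔ ∑ l, F l ⊗ₖ F l = 1 := by
  rw [← RCLike.ofReal_eq_zero (K := 𝕜), ofReal_disturbance hF,
    trace_conjTranspose_mul_self_eq_zero_iff, sub_eq_zero]

end Disturbance

section ScalarKraus

variable {ι m 𝕜 : Type*} [Fintype ι] [DecidableEq m] [RCLike 𝕜] {F : ι → Matrix m m 𝕜}

theorem IsHermitian.apply_eq_zero_of_sum_kronecker_self_eq_one (hF : ∀ l, (F l).IsHermitian)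
    (h : ∑ l, F l ⊗ₖ F l = 1) {i k : m} (hik : i ≠ k) (l : ι) : F l i k = 0 := by
  have hv : (fun l => F l i k) ⬝ᵥ star (fun l => F l i k) = 0 := by
    have := congr($h (i, k) (k, i))
    simpa [sum_kronecker_self_apply, dotProduct, (hF _).apply, hik] using this
  exact congr_fun (dotProduct_self_star_eq_zero.mp hv) l

theorem IsHermitian.apply_self_eq_of_sum_kronecker_self_eq_one (hF : ∀ l, (F l).IsHermitian)
    (h : ∑ l, F l ⊗ₖ F l = 1) (i j : m) (l : ι) : F l i i = F l j j := by
  have hS : ∀ i j, ∑ l, F l i i * F l j j = 1 := fun i j => by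
    simpa [sum_kronecker_self_apply] using congr($h (i, j) (i, j))
  set w : ι → 𝕜 := fun l => F l i i - F l j j
  have hw : star w = w := funext fun l => by simp [w, (hF l).apply]
  have hww : star w ⬝ᵥ w = 0 := by
    rw [hw]
    simp only [w, dotProduct, sub_mul, mul_sub, Finset.sum_sub_distrib, hS]
    ring
  exact sub_eq_zero.mp (congr_fun (dotProduct_star_self_eq_zero.mp hww) l)

theorem IsHermitian.exists_eq_ofReal_smul_one_of_sum_kronecker_self_eq_one
    (hF : ∀ l, (F l).IsHermitian) (h : ∑ l, F l ⊗ₖ F l = 1) (l : ι) :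
    ∃ r : ℝ, F l = (r : 𝕜) • 1 := by
  rcases isEmpty_or_nonempty m with hm | ⟨⟨i₀⟩⟩
  · exact ⟨0, Subsingleton.elim _ _⟩
  refine ⟨RCLike.re (F l i₀ i₀), ?_⟩
  ext i k
  rcases eq_or_ne i k with rfl | hik
  · simp [(hF l).coe_re_apply_self, apply_self_eq_of_sum_kronecker_self_eq_one hF h i i₀]
  · simp [apply_eq_zero_of_sum_kronecker_self_eq_one hF h hik, hik]

end ScalarKraus

end Matrix

/-- For a POVM `{E_i}` on `ℂ^d`, the disturbance
`D = Σ_{l,m} (tr(√E_l √E_m))² − 2 Σ_l (tr √E_l)² + d²` satisfies `D ≥ 0`, with `D = 0`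
iff every effect is a nonnegative real multiple of the identity. -/
theorem disturbance_nonneg_and_zero_iff_trivial
    (d n : ℕ) (E : Fin n → Matrix (Fin d) (Fin d) ℂ)
    (hE : ∀ i, (E i).PosSemidef)
    (hsum : ∑ i, E i = 1)
    (D : ℝ)
    (hD : D = ∑ l, ∑ m, (((hE l).sqrt * (hE m).sqrt).trace.re) ^ 2
        - 2 * ∑ l, (((hE l).sqrt).trace.re) ^ 2 + (d : ℝ) ^ 2) :
    0 ≤ D ∧ (D = 0 ↔ ∀ i, ∃ c : ℝ, 0 ≤ c ∧ E i = (c : ℂ) • (1 : Matrix (Fin d) (Fin d) ℂ)) := by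
  set F := fun l => (hE l).sqrt
  have hF : ∀ l, (F l).IsHermitian := fun l => (hE l).posSemidef_sqrt.1
  have hDF : D = disturbance F := by
    simp only [hD, disturbance, Fintype.card_fin, RCLike.re_to_complex, F]
  rw [hDF, disturbance_eq_zero_iff hF]
  refine ⟨disturbance_nonneg hF, fun h i => ?_, fun h => ?_⟩
  · obtain ⟨r, hr⟩ : ∃ r : ℝ, F i = (r : ℂ) • 1 :=
      IsHermitian.exists_eq_ofReal_smul_one_of_sum_kronecker_self_eq_one hF h i
    refine ⟨r ^ 2, sq_nonneg r, ?_⟩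
    rw [← (hE i).sqrt_mul_self, show (hE i).sqrt = F i from rfl, hr, smul_mul_smul_comm, one_mul,
      Complex.ofReal_pow, sq]
  · have hscalar : ∀ l, ∃ c : ℂ, F l = c • 1 := fun l => by
      obtain ⟨c, -, hc⟩ := h l
      exact ⟨_, (hE l).sqrt_eq_smul_one hc⟩
    rw [sum_kronecker_self_eq_mul_self_kronecker_one hscalar]
    simp only [F, PosSemidef.sqrt_mul_self, hsum, one_kronecker_one]
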